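/- There exists an absolute constant C ≥ 1 with the following property. Let δ > 0 and t > 0 with Cδ ≤ t. Let z = (x, r) and z′ = (x′, r′) be points of B₀ = {(x, r) ∈ ℝ² × ℝ : r ∈ [1/2, 1], |x| ≤ 1/4} with t ≤ |z − z′| ≤ 2t, and let θ ∈ [0, 2π) satisfy |π_θ(z) − π_θ(z′)| ≤ δ, where π_θ is the orthogonal projection of ℝ³ onto the plane orthogonal to γ(θ) = (cos θ, sin θ, 1)/√2. Then r ≠ r′, x ≠ x′, and |sgn(r − r′) · (x′ − x)/|x′ − x| + (cos θ, sin θ)| ≤ C δ/t. -/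

import Mathlib

/-! Put `w = z - z'`, `s = ⟪γ(θ), w⟫` and `K = s / √2`. Since `π_θ w = w - s γ(θ)` has norm at
most `δ`, the horizontal part of `w` lies within `δ` of `K (cos θ, sin θ)` and its vertical part
within `δ` of `K`, while `|s| ≥ |w| - δ ≥ t - δ`. So `|K| ≥ (t - δ)/2` is much larger than `δ`:
`r - r'` has the sign of `K`, `x ≠ x'`, and, since normalising moves a vector at distance at most
`δ` from a vector of length `|K|` to within `2δ/|K|` of its direction, `e(z, z')` is within
`2δ/|K| ≤ 8δ/t` of `-(cos θ, sin θ)`. -/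

open MeasureTheory Metric Real

/-- `ℝ³` as a Euclidean space. -/
noncomputable abbrev E3 := EuclideanSpace ℝ (Fin 3)

/-- The vector `(a, b, c) ∈ ℝ³`. -/
noncomputable def vec3 (a b c : ℝ) : E3 := (WithLp.equiv 2 (Fin 3 → ℝ)).symm ![a, b, c]

/-- The unit vector `γ(θ) = (cos θ, sin θ, 1)/√2`. -/
noncomputable def gam (θ : ℝ) : E3 := (Real.sqrt 2)⁻¹ • vec3 (Real.cos θ) (Real.sin θ) 1

/-- The orthogonal projection `π_θ` of `ℝ³` onto the plane `γ(θ)^⊥`,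
viewed as a map `ℝ³ → ℝ³`. -/
noncomputable def projθ (θ : ℝ) (z : E3) : E3 := (Submodule.orthogonalProjectionOnto (ℝ ∙ gam θ)ᗮ z : E3)

/-- The standard region `B₀ = {(x, r) ∈ ℝ² × ℝ : r ∈ [1/2, 1], |x| ≤ 1/4}`. -/
def B0 : Set E3 :=
  {z | z 2 ∈ Set.Icc (1 / 2 : ℝ) 1 ∧ Real.sqrt ((z 0) ^ 2 + (z 1) ^ 2) ≤ 1 / 4}

open scoped RealInnerProductSpace

section NormedSpace

variable {F : Type*} [NormedAddCommGroup F] [NormedSpace ℝ F]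

theorem norm_inv_norm_smul_sub_inv_norm_smul_le (u : F) {v : F} (hv : v ≠ 0) :
    ‖‖u‖⁻¹ • u - ‖v‖⁻¹ • v‖ ≤ 2 * ‖u - v‖ / ‖v‖ := by
  have hv' : 0 < ‖v‖ := norm_pos_iff.mpr hv
  have hdecomp : ‖u‖⁻¹ • u - ‖v‖⁻¹ • v = ‖v‖⁻¹ • ((‖v‖ * ‖u‖⁻¹ - 1) • u + (u - v)) := by
    rw [smul_add, smul_smul, smul_sub, mul_sub, ← mul_assoc, inv_mul_cancel₀ hv'.ne', one_mul,
      mul_one, sub_smul]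
    abel
  have hrescale : ‖(‖v‖ * ‖u‖⁻¹ - 1) • u‖ ≤ ‖u - v‖ := by
    rcases eq_or_ne u 0 with rfl | hu
    · simp
    have hu' : 0 < ‖u‖ := norm_pos_iff.mpr hu
    rw [norm_smul, Real.norm_eq_abs, ← abs_of_pos hu', ← abs_mul, abs_of_pos hu',
      sub_mul, inv_mul_cancel_right₀ hu'.ne', one_mul]
    exact abs_norm_sub_norm_le v u |>.trans_eq (norm_sub_rev v u)
  rw [hdecomp, norm_smul, norm_inv, norm_norm, inv_mul_eq_div]
  gcongr
  calc _ ≤ ‖(‖v‖ * ‖u‖⁻¹ - 1) • u‖ + ‖u - v‖ := norm_add_le _ _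
    _ ≤ 2 * ‖u - v‖ := by linarith

theorem sign_smul_inv_norm_smul_sub_le {a e : F} (he : ‖e‖ = 1) {c K δ : ℝ}
    (ha : ‖a - K • e‖ ≤ δ) (hc : |c - K| ≤ δ) (hδK : δ < |K|) :
    c ≠ 0 ∧ a ≠ 0 ∧ ‖Real.sign c • ‖a‖⁻¹ • a - e‖ ≤ 2 * δ / |K| := by
  have hK : 0 < |K| := (norm_nonneg _).trans ha |>.trans_lt hδK
  obtain ⟨σ, hσc, hσ, hσK⟩ : ∃ σ : ℝ, Real.sign c = σ ∧ |σ| = 1 ∧ σ * K = |K| := by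
    rcases lt_or_gt_of_ne (abs_pos.mp hK) with hneg | hpos
    · rw [abs_of_neg hneg] at hδK ⊢
      exact ⟨-1, Real.sign_of_neg (by linarith [le_abs_self (c - K)]), by simp, by ring⟩
    · rw [abs_of_pos hpos] at hδK ⊢
      exact ⟨1, Real.sign_of_pos (by linarith [neg_abs_le (c - K)]), by simp, by ring⟩
  refine ⟨?_, ?_, ?_⟩
  · rintro rfl
    rw [zero_sub, abs_neg] at hc
    linarith
  · rintro rfl
    rw [zero_sub, norm_neg, norm_smul, he, mul_one, Real.norm_eq_abs] at ha
    linarith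
  · have hKe : ‖|K| • e‖ = |K| := by rw [norm_smul, he, mul_one, Real.norm_eq_abs, abs_abs]
    have hσa : ‖σ • a‖ = ‖a‖ := by rw [norm_smul, Real.norm_eq_abs, hσ, one_mul]
    have hdiff : ‖σ • a - |K| • e‖ ≤ δ := by
      rwa [← hσK, ← smul_smul, ← smul_sub, norm_smul, Real.norm_eq_abs, hσ, one_mul]
    have := norm_inv_norm_smul_sub_inv_norm_smul_le (σ • a) (v := |K| • e)
      (norm_pos_iff.mp (hKe.symm ▸ hK))
    rw [hσa, hKe, smul_smul, smul_smul, inv_mul_cancel₀ hK.ne', one_smul, mul_comm, ← smul_smul]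
      at this
    rw [hσc]
    exact this.trans (by gcongr)

end NormedSpace

noncomputable def horiz (w : E3) : EuclideanSpace ℝ (Fin 2) := !₂[w 0, w 1]

noncomputable def unitDir (θ : ℝ) : EuclideanSpace ℝ (Fin 2) := !₂[cos θ, sin θ]

theorem EuclideanSpace.norm_fin_two (v : EuclideanSpace ℝ (Fin 2)) :
    ‖v‖ = √(v 0 ^ 2 + v 1 ^ 2) := by
  simp [EuclideanSpace.norm_eq, Fin.sum_univ_two]

theorem EuclideanSpace.norm_fin_three (v : E3) :
    ‖v‖ = √(v 0 ^ 2 + v 1 ^ 2 + v 2 ^ 2) := by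
  simp [EuclideanSpace.norm_eq, Fin.sum_univ_three]

theorem norm_unitDir (θ : ℝ) : ‖unitDir θ‖ = 1 := by
  simp [EuclideanSpace.norm_fin_two, unitDir]

theorem norm_horiz_le (w : E3) : ‖horiz w‖ ≤ ‖w‖ := by
  rw [EuclideanSpace.norm_fin_two, EuclideanSpace.norm_fin_three]
  exact Real.sqrt_le_sqrt (by simp [horiz]; positivity)

theorem norm_gam (θ : ℝ) : ‖gam θ‖ = 1 := by
  rw [gam, norm_smul, EuclideanSpace.norm_fin_three]
  simp [vec3, one_add_one_eq_two, abs_of_pos]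

theorem projθ_apply (θ : ℝ) (y : E3) : projθ θ y = y - ⟪gam θ, y⟫ • gam θ := by
  rw [projθ, ← Submodule.starProjection_apply, Submodule.starProjection_orthogonal_val,
    Submodule.starProjection_unit_singleton ℝ (norm_gam θ)]

theorem projθ_sub (θ : ℝ) (z z' : E3) : projθ θ z - projθ θ z' = projθ θ (z - z') := by
  simp [projθ, map_sub]

theorem norm_le_norm_projθ_add (θ : ℝ) (y : E3) : ‖y‖ ≤ ‖projθ θ y‖ + |⟪gam θ, y⟫| := by
  calc ‖y‖ = ‖projθ θ y + ⟪gam θ, y⟫ • gam θ‖ := by rw [projθ_apply, sub_add_cancel]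
    _ ≤ _ := by grw [norm_add_le, norm_smul, norm_gam, mul_one, Real.norm_eq_abs]

theorem horiz_projθ (θ : ℝ) (y : E3) :
    horiz (projθ θ y) = horiz y - (⟪gam θ, y⟫ / √2) • unitDir θ := by
  ext i; fin_cases i <;> simp [horiz, unitDir, projθ_apply, gam, vec3] <;> ring

theorem projθ_apply_two (θ : ℝ) (y : E3) : projθ θ y 2 = y 2 - ⟪gam θ, y⟫ / √2 := by
  simp [projθ_apply, gam, vec3]; ring

theorem horiz_neg (w : E3) : horiz (-w) = -horiz w := by
  ext i; fin_cases i <;> simp [horiz]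

theorem half_sub_norm_projθ_le_abs_inner_gam_div (θ : ℝ) (y : E3) :
    (‖y‖ - ‖projθ θ y‖) / 2 ≤ |⟪gam θ, y⟫ / √2| := by
  have hsqrt2 : √2 ≤ 2 := Real.sqrt_le_iff.mpr ⟨by norm_num, by norm_num⟩
  rw [abs_div, abs_of_pos (by positivity : (0 : ℝ) < √2)]
  calc (‖y‖ - ‖projθ θ y‖) / 2 ≤ |⟪gam θ, y⟫| / 2 := by
        gcongr; linarith [norm_le_norm_projθ_add θ y]
    _ ≤ |⟪gam θ, y⟫| / √2 := by gcongr

/-- The paper's `e(z, z')`; it is `0` when `x = x'`, as `‖0‖⁻¹ = 0`. -/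
noncomputable def tangentDir (z z' : E3) : EuclideanSpace ℝ (Fin 2) :=
  Real.sign (z 2 - z' 2) • ‖horiz (z' - z)‖⁻¹ • horiz (z' - z)

theorem norm_tangentDir_add_unitDir (z z' : E3) (θ : ℝ) :
    ‖tangentDir z z' + unitDir θ‖ =
      √((Real.sign (z 2 - z' 2) * (z' 0 - z 0)
            / √((z' 0 - z 0) ^ 2 + (z' 1 - z 1) ^ 2) + cos θ) ^ 2
          + (Real.sign (z 2 - z' 2) * (z' 1 - z 1)
            / √((z' 0 - z 0) ^ 2 + (z' 1 - z 1) ^ 2) + sin θ) ^ 2) := by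
  have hR : √((z' 0 - z 0) ^ 2 + (z' 1 - z 1) ^ 2) = ‖horiz (z' - z)‖ := by
    simp [EuclideanSpace.norm_fin_two, horiz]
  rw [hR, EuclideanSpace.norm_fin_two]
  simp [tangentDir, horiz, unitDir]
  ring_nf

/-- There is an absolute constant `C ≥ 1` such that: if `δ > 0`, `t > 0`
with `Cδ ≤ t`, `z = (x, r)` and `z' = (x', r')` are points of `B₀` with `t ≤ |z − z'| ≤ 2t`,
and `θ ∈ [0, 2π)` satisfies `|π_θ(z) − π_θ(z')| ≤ δ`, then `r ≠ r'`, `x ≠ x'`, and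
`|sgn(r − r')·(x' − x)/|x' − x| + (cos θ, sin θ)| ≤ Cδ/t`. -/
theorem stmt9 :
    ∃ C : ℝ, 1 ≤ C ∧
      ∀ δ t : ℝ, 0 < δ → 0 < t → C * δ ≤ t →
        ∀ z ∈ B0, ∀ z' ∈ B0, t ≤ ‖z - z'‖ → ‖z - z'‖ ≤ 2 * t →
          ∀ θ ∈ Set.Ico (0 : ℝ) (2 * π), ‖projθ θ z - projθ θ z'‖ ≤ δ →
            z 2 ≠ z' 2 ∧ ¬(z 0 = z' 0 ∧ z 1 = z' 1) ∧
            Real.sqrt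
                ((Real.sign (z 2 - z' 2) * (z' 0 - z 0)
                    / Real.sqrt ((z' 0 - z 0) ^ 2 + (z' 1 - z 1) ^ 2) + Real.cos θ) ^ 2
                  + (Real.sign (z 2 - z' 2) * (z' 1 - z 1)
                    / Real.sqrt ((z' 0 - z 0) ^ 2 + (z' 1 - z 1) ^ 2) + Real.sin θ) ^ 2)
              ≤ C * δ / t := by
  refine ⟨8, by norm_num, fun δ t hδ ht hδt z _ z' _ hzz' _ θ _ hproj => ?_⟩
  rw [projθ_sub] at hproj
  set K := ⟪gam θ, z - z'⟫ / √2
  have hK : (t - δ) / 2 ≤ |K| := by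
    grw [hzz', ← hproj]; exact half_sub_norm_projθ_le_abs_inner_gam_div θ (z - z')
  have ha : ‖horiz (z' - z) - K • -unitDir θ‖ ≤ δ := by
    have : horiz (z' - z) - K • -unitDir θ = -horiz (projθ θ (z - z')) := by
      rw [horiz_projθ, ← neg_sub z, horiz_neg, smul_neg]; abel
    rw [this, norm_neg]
    exact (norm_horiz_le _).trans hproj
  have hc : |z 2 - z' 2 - K| ≤ δ :=
    calc |z 2 - z' 2 - K| = ‖projθ θ (z - z') 2‖ := by
          rw [projθ_apply_two, PiLp.sub_apply, Real.norm_eq_abs]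
      _ ≤ δ := (PiLp.norm_apply_le _ 2).trans hproj
  obtain ⟨hc0, ha0, hdir⟩ := sign_smul_inv_norm_smul_sub_le (by rw [norm_neg, norm_unitDir]) ha hc
    (by linarith)
  refine ⟨sub_ne_zero.mp hc0, fun ⟨h0, h1⟩ => ha0 ?_, ?_⟩
  · ext i; fin_cases i <;> simp [horiz, h0, h1]
  · rw [← norm_tangentDir_add_unitDir, tangentDir, ← sub_neg_eq_add]
    refine hdir.trans ?_
    rw [div_le_div_iff₀ (by linarith) ht]
    nlinarith
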